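/- arXiv:2112.03147 — 2 statements merged into one kernel-verified Lean document; each statement's English description precedes it below -/
import Mathlib

section
/- For any partition λ with more than n parts, the Schur-Weierstrass polynomial σ_λ vanishes identically under the substitution x_i = p_i(u_1,...,u_n)/i: σ_λ(p_1, p_2/2, p_3/3, ...) = 0 as a polynomial in u_1, ..., u_n. -/
open MvPolynomial in
/-- The generating series `Σ_{i≥1} x_i t^i` with coefficients in `ℚ[x_1, x_2, …]`. -/
noncomputable def swGen : PowerSeries (MvPolynomial ℕ ℚ) :=
  PowerSeries.mk fun i => if i = 0 then 0 else MvPolynomial.X i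

/-- The elementary Schur–Weierstrass polynomial `σ_k`, i.e. the coefficient of `t^k`
in `exp (Σ_{i≥1} x_i t^i) = Σ_m (Σ x_i t^i)^m / m!` (the terms with `m > k` do not
contribute to the coefficient of `t^k`). -/
noncomputable def sw (k : ℕ) : MvPolynomial ℕ ℚ :=
  ∑ m ∈ Finset.range (k + 1),
    (Nat.factorial m : ℚ)⁻¹ • PowerSeries.coeff k (swGen ^ m)

/-- `σ_k` for integer index, with `σ_k = 0` for `k < 0`. -/
noncomputable def swZ (k : ℤ) : MvPolynomial ℕ ℚ :=
  if 0 ≤ k then sw k.toNat else 0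

/-- The Schur–Weierstrass polynomial `σ_λ = det (σ_{λ_i + j - i})_{1 ≤ i,j ≤ m}`. -/
noncomputable def swSchur {m : ℕ} (lam : Fin m → ℕ) : MvPolynomial ℕ ℚ :=
  Matrix.det (Matrix.of fun i j : Fin m => swZ ((lam i : ℤ) + (j : ℕ) - (i : ℕ)))

/-- Substitution `x_i ↦ p_i(u_1,…,u_n)/i`, where `p_i` is the `i`-th power sum. -/
noncomputable def powerSub (n : ℕ) : MvPolynomial ℕ ℚ →ₐ[ℚ] MvPolynomial (Fin n) ℚ :=
  MvPolynomial.aeval fun i : ℕ => ((i : ℚ))⁻¹ • MvPolynomial.psum (Fin n) ℚ i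

/-!
Under `x_i ↦ p_i / i` the series `exp (Σ x_i t^i)` becomes `H = exp (Σ_j log (1 - u_j t)⁻¹)`,
so `E * H = 1` for the polynomial `E = ∏_j (1 - u_j t)` of degree `n`; this is checked by
comparing derivatives, `exp` being characterised by `(exp G)' = exp G * G'`. Row `i` of the
matrix `(h_{λ_i + j - i})` applied to `(e_{m-1}, …, e_1, e_0)` is the coefficient of
`t ^ (λ_i + m - 1 - i)` in `E * H`, which vanishes as this exponent is positive and `e_k = 0`
for `k ≥ m > n`. Since `e_0 = 1`, the determinant is zero.
-/

namespace PowerSeries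

section ExpSeries

variable {R : Type*} [CommRing R] [Algebra ℚ R]

noncomputable def partialExp (B : ℕ) (G : R⟦X⟧) : R⟦X⟧ :=
  ∑ m ∈ Finset.range B, (m.factorial : ℚ)⁻¹ • G ^ m

/-- `exp G` for `G` without constant term: only the terms with `m ≤ k` of `Σ G ^ m / m!`
contribute to the coefficient of `X ^ k`. -/
noncomputable def expSeries (G : R⟦X⟧) : R⟦X⟧ :=
  mk fun k => coeff k (partialExp (k + 1) G)

theorem coeff_expSeries_of_lt {G : R⟦X⟧} (hG : constantCoeff G = 0) {k B : ℕ} (hk : k < B) :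
    coeff k (expSeries G) = coeff k (partialExp B G) := by
  rw [expSeries, coeff_mk, partialExp, partialExp, map_sum, map_sum]
  refine Finset.sum_subset (Finset.range_subset_range.mpr hk) fun m _ hm => ?_
  have hkm : (k : ℕ∞) < (G ^ m).order :=
    (Nat.cast_lt.mpr (by simpa using hm)).trans_le (le_order_pow_of_constantCoeff_eq_zero m hG)
  rw [coeff_smul, coeff_of_lt_order k hkm, smul_zero]

theorem trunc_expSeries {G : R⟦X⟧} (hG : constantCoeff G = 0) (B : ℕ) :
    trunc B (expSeries G) = trunc B (partialExp B G) := by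
  ext k
  rw [coeff_trunc, coeff_trunc]
  split_ifs with hk
  exacts [coeff_expSeries_of_lt hG hk, rfl]

theorem constantCoeff_expSeries (G : R⟦X⟧) : constantCoeff (expSeries G) = 1 := by
  rw [← coeff_zero_eq_constantCoeff_apply]
  simp [expSeries, partialExp]

theorem derivative_partialExp (B : ℕ) (G : R⟦X⟧) :
    d⁄dX R (partialExp (B + 1) G) = partialExp B G * d⁄dX R G := by
  rw [partialExp, Finset.sum_range_succ', pow_zero, map_add, Derivation.map_smul_of_tower,
    Derivation.map_one_eq_zero, smul_zero, add_zero, map_sum, partialExp, Finset.sum_mul]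
  refine Finset.sum_congr rfl fun m _ => ?_
  rw [Derivation.map_smul_of_tower, derivative_pow, Nat.add_sub_cancel, ← nsmul_eq_mul,
    ← Nat.cast_smul_eq_nsmul ℚ, smul_mul_assoc, smul_mul_assoc, smul_smul]
  congr 1
  rw [Nat.factorial_succ]
  push_cast
  field_simp

theorem derivative_expSeries {G : R⟦X⟧} (hG : constantCoeff G = 0) :
    d⁄dX R (expSeries G) = expSeries G * d⁄dX R G := by
  ext k
  rw [coeff_derivative, coeff_expSeries_of_lt hG (k + 1).lt_succ_self, ← coeff_derivative,
    derivative_partialExp, ← coeff_coe_trunc_of_lt k.lt_succ_self, ← trunc_trunc_mul,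
    ← trunc_expSeries hG, trunc_trunc_mul, coeff_coe_trunc_of_lt k.lt_succ_self]

theorem map_expSeries {S : Type*} [CommRing S] [Algebra ℚ S] (f : R →ₐ[ℚ] S)
    (G : R⟦X⟧) :
    map (f : R →+* S) (expSeries G) = expSeries (map (f : R →+* S) G) := by
  ext k
  simp [expSeries, partialExp, coeff_map, map_sum, ← map_pow]

end ExpSeries

section ProdOneSub

variable {R : Type*} [CommRing R]

theorem mk_pow_mul_one_sub_C_mul_X (a : R) : mk (a ^ ·) * (1 - C a * X) = 1 := by
  have h := congr(rescale a $(mk_one_mul_one_sub_eq_one (S := R)))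
  simpa [rescale_mk] using h

theorem derivative_prod_one_sub_C_mul_X {ι : Type*} (s : Finset ι) (a : ι → R) :
    d⁄dX R (∏ j ∈ s, (1 - C (a j) * X))
      = -(∏ j ∈ s, (1 - C (a j) * X)) * ∑ j ∈ s, C (a j) * mk (a j ^ ·) := by
  classical
  induction s using Finset.induction_on with
  | empty => simp
  | insert i s hi ih =>
    rw [Finset.prod_insert hi, Finset.sum_insert hi, Derivation.leibniz, smul_eq_mul,
      smul_eq_mul, ih]
    have hD : d⁄dX R (1 - C (a i) * X) = -C (a i) := by simp
    rw [hD]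
    linear_combination (∏ j ∈ s, (1 - C (a j) * X)) * C (a i) * mk_pow_mul_one_sub_C_mul_X (a i)

theorem coeff_prod_one_sub_C_mul_X_of_card_lt {ι : Type*} (s : Finset ι) (a : ι → R) {k : ℕ}
    (hk : s.card < k) : coeff k (∏ j ∈ s, (1 - C (a j) * X)) = 0 := by
  have hcoe : ∏ j ∈ s, (1 - C (a j) * X) =
      ((∏ j ∈ s, (1 - Polynomial.C (a j) * Polynomial.X) : Polynomial R) : R⟦X⟧) := by
    rw [← Polynomial.coeToPowerSeries.ringHom_apply, map_prod]
    simp [Polynomial.coeToPowerSeries.ringHom_apply]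
  rw [hcoe, Polynomial.coeff_coe]
  refine Polynomial.coeff_eq_zero_of_natDegree_lt ((Polynomial.natDegree_prod_le _ _).trans_lt ?_)
  refine (Finset.sum_le_card_nsmul _ _ 1 fun j _ => ?_).trans_lt (by simpa using hk)
  compute_degree

end ProdOneSub

section PowerSumLog

variable {R : Type*} [CommRing R] [Algebra ℚ R] {ι : Type*}

/-- `Σ_j log (1 - a_j X)⁻¹ = Σ_{i ≥ 1} p_i(a) X^i / i`, where `p_i` are the power sums
of the `a_j`. -/
noncomputable def powerSumLog (s : Finset ι) (a : ι → R) : R⟦X⟧ :=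
  mk fun i => if i = 0 then 0 else (i : ℚ)⁻¹ • ∑ j ∈ s, a j ^ i

theorem constantCoeff_powerSumLog (s : Finset ι) (a : ι → R) :
    constantCoeff (powerSumLog s a) = 0 := by
  rw [← coeff_zero_eq_constantCoeff_apply]
  simp [powerSumLog]

theorem derivative_powerSumLog (s : Finset ι) (a : ι → R) :
    d⁄dX R (powerSumLog s a) = ∑ j ∈ s, C (a j) * mk (a j ^ ·) := by
  ext k
  have hk : ((k + 1 : ℕ) : ℚ) ≠ 0 := Nat.cast_ne_zero.mpr k.succ_ne_zero
  rw [coeff_derivative, powerSumLog, coeff_mk, if_neg k.succ_ne_zero, map_sum]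
  simp only [coeff_C_mul, coeff_mk, ← pow_succ']
  rw [← Nat.cast_add_one, ← map_natCast (algebraMap ℚ R), mul_comm, ← Algebra.smul_def,
    smul_smul, mul_inv_cancel₀ hk, one_smul]

theorem prod_one_sub_C_mul_X_mul_expSeries_powerSumLog (s : Finset ι) (a : ι → R) :
    (∏ j ∈ s, (1 - C (a j) * X)) * expSeries (powerSumLog s a) = 1 := by
  have : IsAddTorsionFree R := .of_module_rat R
  refine derivative.ext ?_ (by simp [constantCoeff_expSeries])
  rw [Derivation.leibniz, derivative_expSeries (constantCoeff_powerSumLog s a),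
    derivative_powerSumLog, derivative_prod_one_sub_C_mul_X, Derivation.map_one_eq_zero,
    smul_eq_mul, smul_eq_mul]
  ring

end PowerSumLog

section SchurDeterminant

variable {R : Type*} [CommRing R]

open Matrix

noncomputable def coeffInt (z : ℤ) (f : R⟦X⟧) : R :=
  if 0 ≤ z then coeff z.toNat f else 0

theorem coeffInt_map {S : Type*} [CommRing S] (g : R →+* S) (z : ℤ) (f : R⟦X⟧) :
    coeffInt z (map g f) = g (coeffInt z f) := by
  unfold coeffInt
  split_ifs <;> simp [coeff_map]

theorem sum_range_coeff_mul_coeffInt_sub {E H : R⟦X⟧} {m : ℕ}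
    (hE : ∀ k, m ≤ k → coeff k E = 0) (N : ℕ) :
    ∑ k ∈ Finset.range m, coeff k E * coeffInt (N - k) H = coeff N (E * H) := by
  set f : ℕ → R := fun k => coeff k E * coeffInt (N - k) H
  have hm : ∑ k ∈ Finset.range m, f k = ∑ k ∈ Finset.range (max m (N + 1)), f k :=
    Finset.sum_subset (Finset.range_subset_range.mpr (le_max_left _ _)) fun k _ hk => by
      simp [f, hE k (by simpa using hk)]
  have hN : ∑ k ∈ Finset.range (N + 1), f k = ∑ k ∈ Finset.range (max m (N + 1)), f k :=
    Finset.sum_subset (Finset.range_subset_range.mpr (le_max_right _ _)) fun k _ hk => by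
      have : N < k := by simpa using hk
      simp only [f, coeffInt, if_neg (show ¬(0 : ℤ) ≤ N - k by omega), mul_zero]
  rw [hm, ← hN, coeff_mul, Finset.Nat.sum_antidiagonal_eq_sum_range_succ_mk]
  refine Finset.sum_congr rfl fun k hk => ?_
  have : k ≤ N := Nat.lt_succ_iff.mp (Finset.mem_range.mp hk)
  simp only [f, coeffInt, if_pos (show (0 : ℤ) ≤ N - k by omega),
    show ((N : ℤ) - k).toNat = N - k by omega]

/-- The coefficients of `E`, read backwards, form a kernel vector whose last entry is a unit. -/
theorem det_coeffInt_eq_zero_of_mul_eq_one {E H : R⟦X⟧} (hEH : E * H = 1) {m : ℕ}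
    (hE : ∀ k, m ≤ k → coeff k E = 0) {lam : Fin m → ℕ} (hlam : ∀ i, 0 < lam i) :
    (Matrix.of fun i j : Fin m => coeffInt ((lam i : ℤ) + (j : ℕ) - (i : ℕ)) H).det = 0 := by
  have hunit : IsUnit (coeff 0 E) :=
    IsUnit.of_mul_eq_one (constantCoeff H) (by simp [← map_mul, hEH])
  cases m with
  | zero =>
    rw [hE 0 le_rfl, isUnit_zero_iff] at hunit
    exact (subsingleton_of_zero_eq_one hunit).elim _ _
  | succ m =>
    set M := Matrix.of fun i j : Fin (m + 1) => coeffInt ((lam i : ℤ) + (j : ℕ) - (i : ℕ)) H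
    set v : Fin (m + 1) → R := fun j => coeff (m - j) E
    have hMv : M *ᵥ v = 0 := by
      ext i
      have hrow : ∀ j : Fin (m + 1), M i (Fin.rev j) * v (Fin.rev j)
          = coeff j E * coeffInt (((lam i + m - i : ℕ) : ℤ) - (j : ℕ)) H := by
        intro j
        simp only [M, v, Matrix.of_apply, Fin.val_rev]
        rw [mul_comm, show m - (m + 1 - (j + 1)) = j by omega]
        congr 2
        omega
      rw [Matrix.mulVec, dotProduct, ← Equiv.sum_comp Fin.revPerm, Pi.zero_apply]
      simp only [Fin.revPerm_apply, hrow]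
      rw [Fin.sum_univ_eq_sum_range (fun k => coeff k E * coeffInt (_ - (k : ℤ)) H),
        sum_range_coeff_mul_coeffInt_sub hE, hEH, coeff_one, if_neg]
      have := hlam i
      omega
    refine Matrix.det_eq_zero_of_mulVec_eq_zero_of_mem_nonZeroDivisors hMv (i := Fin.last m) ?_
    simpa [v] using hunit.mem_nonZeroDivisors

end SchurDeterminant

end PowerSeries

open PowerSeries

theorem swZ_eq_coeffInt (z : ℤ) : swZ z = coeffInt z (expSeries swGen) := by
  simp [swZ, coeffInt, sw, expSeries, partialExp, map_sum]

theorem map_powerSub_swGen (n : ℕ) :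
    map (powerSub n : MvPolynomial ℕ ℚ →+* MvPolynomial (Fin n) ℚ) swGen
      = powerSumLog Finset.univ MvPolynomial.X := by
  ext i
  by_cases hi : i = 0 <;> simp [swGen, powerSumLog, powerSub, hi, MvPolynomial.psum]

theorem stmt_11_general (n m : ℕ) (lam : Fin m → ℕ)
    (hpos : ∀ i, 0 < lam i) (hmn : n < m) :
    powerSub n (swSchur lam) = 0 := by
  have hEH := prod_one_sub_C_mul_X_mul_expSeries_powerSumLog Finset.univ
    (MvPolynomial.X : Fin n → MvPolynomial (Fin n) ℚ)
  have hE (k : ℕ) (hk : m ≤ k) :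
      coeff k (∏ j : Fin n, (1 - C (MvPolynomial.X (R := ℚ) j) * X)) = 0 :=
    coeff_prod_one_sub_C_mul_X_of_card_lt _ _ (by simpa using hmn.trans_le hk)
  rw [swSchur, AlgHom.map_det, ← det_coeffInt_eq_zero_of_mul_eq_one hEH hE hpos]
  congr 1
  ext i j
  rw [AlgHom.mapMatrix_apply, Matrix.map_apply, Matrix.of_apply, Matrix.of_apply,
    swZ_eq_coeffInt, ← map_powerSub_swGen, ← map_expSeries, coeffInt_map]
  rfl

/-- If the partition `λ` has more than `n` parts, then `σ_λ` vanishes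
identically under the substitution `x_i ↦ p_i(u_1,…,u_n)/i`. -/
theorem stmt_11 (n m : ℕ) (lam : Fin m → ℕ) (hdec : Antitone lam)
    (hpos : ∀ i, 0 < lam i) (hmn : n < m) :
    powerSub n (swSchur lam) = 0 :=
  stmt_11_general n m lam hpos hmn
end

section
/- With σ_λ the Schur-Weierstrass polynomial for λ = (4,1,1,1), one has 252·σ_{(4,1,1,1)}(x_1, x_2, x_3, ..., x_7, ...) = x_1^7 + 21 x_1^4 x_3 - 84 x_1^3 x_2^2 + 252 x_2^2 x_3 + 252 x_1 x_3^2 - 252 x_7; in particular σ_{(4,1,1,1)} depends only on the variables x_1, x_2, x_3, x_7. -/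
/-! The polynomials `σ_0, …, σ_7` are computed directly from the definition: `k! σ_k` is
`Σ_m (k!/m!) [t^k] g^m` with `g = Σ x_i t^i`, and the coefficients of `g^m` unfold recursively
from `g^(m+1) = g · g^m`. Expanding the determinant along its first column writes
`σ_{(a,1,1,1)}` in terms of `σ_1, σ_2, σ_3` and `σ_a, …, σ_{a+3}`; substituting the computed
values gives the identity, and the bound on the variables is read off from its right-hand side. -/

open MvPolynomial Nat

lemma coeff_swGen (n : ℕ) :
    PowerSeries.coeff n swGen = if n = 0 then 0 else X n := by
  simp [swGen]

lemma constantCoeff_swGen : PowerSeries.constantCoeff swGen = 0 := by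
  rw [← PowerSeries.coeff_zero_eq_constantCoeff_apply, coeff_swGen, if_pos rfl]

lemma coeff_swGen_pow_of_lt {m n : ℕ} (h : n < m) : PowerSeries.coeff n (swGen ^ m) = 0 :=
  PowerSeries.X_pow_dvd_iff.mp
    (pow_dvd_pow_of_dvd (PowerSeries.X_dvd_iff.mpr constantCoeff_swGen) m) n h

/-- Stated for `n + 1` rather than `n` so that, used as a `simp` lemma, it only unfolds
coefficients whose index is already a numeral. -/
lemma coeff_succ_swGen_pow_succ (m n : ℕ) :
    PowerSeries.coeff (n + 1) (swGen ^ (m + 1)) =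
      ∑ i ∈ Finset.range (n + 1), X (i + 1) * PowerSeries.coeff (n - i) (swGen ^ m) := by
  rw [_root_.pow_succ', PowerSeries.coeff_mul, Finset.Nat.sum_antidiagonal_eq_sum_range_succ_mk,
    Finset.sum_range_succ']
  simp [coeff_swGen]

lemma factorial_mul_sw (k : ℕ) :
    (k ! : MvPolynomial ℕ ℚ) * sw k =
      ∑ m ∈ Finset.range (k + 1), ((k ! / m ! : ℕ) : MvPolynomial ℕ ℚ) *
        PowerSeries.coeff k (swGen ^ m) := by
  rw [sw, Finset.mul_sum]
  refine Finset.sum_congr rfl fun m hm => ?_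
  rw [smul_eq_C_mul, ← mul_assoc, ← map_natCast C, ← map_natCast C, ← C_mul,
    Nat.cast_div (factorial_dvd_factorial (Finset.mem_range_succ_iff.mp hm)) (by positivity),
    div_eq_mul_inv]

lemma sw_zero : sw 0 = 1 := by
  simpa [Finset.sum_range_succ] using factorial_mul_sw 0

lemma sw_one : sw 1 = X 1 := by
  simpa [Finset.sum_range_succ, coeff_swGen] using factorial_mul_sw 1

lemma factorial_mul_sw_two : (2 : MvPolynomial ℕ ℚ) * sw 2 = 2 * X 2 + X 1 ^ 2 := by
  have h := factorial_mul_sw 2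
  simp [Finset.sum_range_succ, coeff_succ_swGen_pow_succ, PowerSeries.coeff_one,
    coeff_swGen, Nat.factorial] at h
  linear_combination h

lemma factorial_mul_sw_three :
    (6 : MvPolynomial ℕ ℚ) * sw 3 = 6 * X 3 + 6 * X 1 * X 2 + X 1 ^ 3 := by
  have h := factorial_mul_sw 3
  simp [Finset.sum_range_succ, coeff_succ_swGen_pow_succ, coeff_swGen_pow_of_lt,
    PowerSeries.coeff_one, coeff_swGen, Nat.factorial] at h
  linear_combination h

lemma factorial_mul_sw_four :
    (24 : MvPolynomial ℕ ℚ) * sw 4 =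
      24 * X 4 + 12 * X 2 ^ 2 + 24 * X 1 * X 3 + 12 * X 1 ^ 2 * X 2 + X 1 ^ 4 := by
  have h := factorial_mul_sw 4
  simp [Finset.sum_range_succ, coeff_succ_swGen_pow_succ, coeff_swGen_pow_of_lt,
    PowerSeries.coeff_one, coeff_swGen, Nat.factorial] at h
  linear_combination h

lemma factorial_mul_sw_five :
    (120 : MvPolynomial ℕ ℚ) * sw 5 =
      120 * X 5 + 120 * X 2 * X 3 + 120 * X 1 * X 4 + 60 * X 1 * X 2 ^ 2 + 60 * X 1 ^ 2 * X 3
        + 20 * X 1 ^ 3 * X 2 + X 1 ^ 5 := by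
  have h := factorial_mul_sw 5
  simp [Finset.sum_range_succ, coeff_succ_swGen_pow_succ, coeff_swGen_pow_of_lt,
    PowerSeries.coeff_one, coeff_swGen, Nat.factorial] at h
  linear_combination h

lemma factorial_mul_sw_six :
    (720 : MvPolynomial ℕ ℚ) * sw 6 =
      720 * X 6 + 360 * X 3 ^ 2 + 720 * X 2 * X 4 + 120 * X 2 ^ 3 + 720 * X 1 * X 5
        + 720 * X 1 * X 2 * X 3 + 360 * X 1 ^ 2 * X 4 + 180 * X 1 ^ 2 * X 2 ^ 2
        + 120 * X 1 ^ 3 * X 3 + 30 * X 1 ^ 4 * X 2 + X 1 ^ 6 := by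
  have h := factorial_mul_sw 6
  simp [Finset.sum_range_succ, coeff_succ_swGen_pow_succ, coeff_swGen_pow_of_lt,
    PowerSeries.coeff_one, coeff_swGen, Nat.factorial] at h
  linear_combination h

lemma factorial_mul_sw_seven :
    (5040 : MvPolynomial ℕ ℚ) * sw 7 =
      5040 * X 7 + 5040 * X 3 * X 4 + 5040 * X 2 * X 5 + 2520 * X 2 ^ 2 * X 3 + 5040 * X 1 * X 6
        + 2520 * X 1 * X 3 ^ 2 + 5040 * X 1 * X 2 * X 4 + 840 * X 1 * X 2 ^ 3
        + 2520 * X 1 ^ 2 * X 5 + 2520 * X 1 ^ 2 * X 2 * X 3 + 840 * X 1 ^ 3 * X 4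
        + 420 * X 1 ^ 3 * X 2 ^ 2 + 210 * X 1 ^ 4 * X 3 + 42 * X 1 ^ 5 * X 2 + X 1 ^ 7 := by
  have h := factorial_mul_sw 7
  simp [Finset.sum_range_succ, coeff_succ_swGen_pow_succ, coeff_swGen_pow_of_lt,
    PowerSeries.coeff_one, coeff_swGen, Nat.factorial] at h
  linear_combination h

lemma swSchur_hook (a : ℕ) :
    swSchur ![a, 1, 1, 1] =
      sw a * (sw 1 ^ 3 - 2 * sw 1 * sw 2 + sw 3) - sw (a + 1) * (sw 1 ^ 2 - sw 2)
        + sw (a + 2) * sw 1 - sw (a + 3) := by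
  have hM : (Matrix.of fun i j : Fin 4 => swZ ((![a, 1, 1, 1] i : ℤ) + (j : ℕ) - (i : ℕ))) =
      !![sw a, sw (a + 1), sw (a + 2), sw (a + 3); sw 0, sw 1, sw 2, sw 3;
        0, sw 0, sw 1, sw 2; 0, 0, sw 0, sw 1] := by
    ext i j
    fin_cases i <;> fin_cases j <;> rfl
  rw [swSchur, hM, Matrix.det_succ_column_zero]
  simp [Fin.sum_univ_succ, Matrix.det_fin_three, Matrix.submatrix, Fin.succAbove, sw_zero]
  ring

lemma smul_swSchur_four_one_one_one :
    (252 : ℚ) • swSchur ![4, 1, 1, 1] =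
      (X 1 : MvPolynomial ℕ ℚ) ^ 7 + 21 * X 1 ^ 4 * X 3 - 84 * X 1 ^ 3 * X 2 ^ 2
        + 252 * X 2 ^ 2 * X 3 + 252 * X 1 * X 3 ^ 2 - 252 * X 7 := by
  rw [smul_eq_C_mul, map_ofNat]
  -- `5040 = 7!` clears the denominators of `σ_2, …, σ_7`.
  refine mul_left_cancel₀ (by norm_num : (5040 : MvPolynomial ℕ ℚ) ≠ 0) ?_
  rw [swSchur_hook, sw_one]
  have hσ₄σ₂ := congrArg₂ (· * ·) factorial_mul_sw_four factorial_mul_sw_two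
  have hσ₄σ₃ := congrArg₂ (· * ·) factorial_mul_sw_four factorial_mul_sw_three
  have hσ₅σ₂ := congrArg₂ (· * ·) factorial_mul_sw_five factorial_mul_sw_two
  linear_combination (52920 * X 1 ^ 3) * factorial_mul_sw_four - (52920 * X 1) * hσ₄σ₂
    + 8820 * hσ₄σ₃ - (10584 * X 1 ^ 2) * factorial_mul_sw_five + 5292 * hσ₅σ₂
    + (1764 * X 1) * factorial_mul_sw_six - 252 * factorial_mul_sw_seven

open MvPolynomial in
/-- `252 σ_{(4,1,1,1)} = x₁⁷ + 21 x₁⁴ x₃ − 84 x₁³ x₂² + 252 x₂² x₃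
+ 252 x₁ x₃² − 252 x₇`; in particular `σ_{(4,1,1,1)}` depends only on
`x₁, x₂, x₃, x₇`. -/
theorem stmt_15 :
    (252 : ℚ) • swSchur ![4, 1, 1, 1] =
      (X 1 : MvPolynomial ℕ ℚ) ^ 7 + 21 * X 1 ^ 4 * X 3 - 84 * X 1 ^ 3 * X 2 ^ 2
        + 252 * X 2 ^ 2 * X 3 + 252 * X 1 * X 3 ^ 2 - 252 * X 7 ∧
    (swSchur ![4, 1, 1, 1]).vars ⊆ ({1, 2, 3, 7} : Finset ℕ) := by
  refine ⟨smul_swSchur_four_one_one_one, ?_⟩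
  rw [← vars_C_mul (252 : ℚ) (by norm_num), ← smul_eq_C_mul, smul_swSchur_four_one_one_one,
    ← Finset.coe_subset, ← mem_supported]
  have hX : ∀ i ∈ ({1, 2, 3, 7} : Finset ℕ),
      (X i : MvPolynomial ℕ ℚ) ∈ supported ℚ ↑({1, 2, 3, 7} : Finset ℕ) :=
    fun i hi => X_mem_supported.mpr hi
  aesop (add safe apply [add_mem, sub_mem, mul_mem, pow_mem, ofNat_mem])
end
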